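/- Let λ ∈ ℂ, c > 0, and let Λ be given by Λ^0_{ii} = −λc², Λ^i_{0i} = −λ for i ∈ {1,2,3}, with all other components zero. Then for every i ∈ {1,2,3} and every t ∈ {0,1,2,3}, −Σ_s Λ^s_{0i}·Λ^t_{s0} + λ·Λ^t_{0i} + Σ_s Λ^s_{00}·Λ^t_{si} = −λ² if t = i and = 0 otherwise. In particular, when λ ≠ 0 this coefficient vector is nonzero, so the Jacobi identity fails at order λ². -/

import Mathlib

/-!
Every component `Λᵗₛ₀` of this solution vanishes, so both quadratic sums are zero and only
`λ Λᵗ₀ᵢ = -λ² δᵗᵢ` survives.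
-/

/-- The explicit solution: `Λ⁰ᵢᵢ = -λc²`, `Λⁱ₀ᵢ = -λ` for `i ∈ {1,2,3}`, all else zero. -/
noncomputable def lamSol (c : ℝ) (lam : ℂ) : Fin 4 → Fin 4 → Fin 4 → ℂ :=
  fun s a b =>
    if s = 0 ∧ a = b ∧ a ≠ 0 then -lam * (c : ℂ)^2
    else if a = 0 ∧ b = s ∧ s ≠ 0 then -lam
    else 0

section lamSol

variable (c : ℝ) (lam : ℂ)

theorem lamSol_apply_zero_right (t a : Fin 4) : lamSol c lam t a 0 = 0 := by
  unfold lamSol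
  split_ifs <;> grind

theorem lamSol_zero_apply_of_ne_zero {i : Fin 4} (hi : i ≠ 0) (t : Fin 4) :
    lamSol c lam t 0 i = if t = i then -lam else 0 := by
  unfold lamSol
  split_ifs <;> grind

theorem jacobi_coeff_lamSol {i : Fin 4} (hi : i ≠ 0) (t : Fin 4) :
    -(∑ s : Fin 4, lamSol c lam s 0 i * lamSol c lam t s 0)
        + lam * lamSol c lam t 0 i
        + ∑ s : Fin 4, lamSol c lam s 0 0 * lamSol c lam t s i
      = if t = i then -lam^2 else 0 := by
  simp only [lamSol_apply_zero_right, lamSol_zero_apply_of_ne_zero c lam hi, mul_zero, zero_mul,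
    Finset.sum_const_zero, neg_zero, zero_add, add_zero]
  split_ifs <;> ring

end lamSol

theorem jacobi_fails_at_order_lambda_sq_general (c : ℝ) (lam : ℂ) :
    (∀ i ∈ ({1,2,3} : Finset (Fin 4)), ∀ t : Fin 4,
      -(∑ s : Fin 4, lamSol c lam s 0 i * lamSol c lam t s 0)
          + lam * lamSol c lam t 0 i
          + ∑ s : Fin 4, lamSol c lam s 0 0 * lamSol c lam t s i
        = if t = i then -lam^2 else 0) ∧
    (lam ≠ 0 → ∀ i ∈ ({1,2,3} : Finset (Fin 4)), ∃ t : Fin 4,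
      -(∑ s : Fin 4, lamSol c lam s 0 i * lamSol c lam t s 0)
          + lam * lamSol c lam t 0 i
          + ∑ s : Fin 4, lamSol c lam s 0 0 * lamSol c lam t s i
        ≠ 0) := by
  have spatial_ne_zero : ∀ i ∈ ({1,2,3} : Finset (Fin 4)), i ≠ 0 := by decide
  refine ⟨fun i hi => jacobi_coeff_lamSol c lam (spatial_ne_zero i hi),
    fun hlam i hi => ⟨i, ?_⟩⟩
  rw [jacobi_coeff_lamSol c lam (spatial_ne_zero i hi), if_pos rfl]
  exact neg_ne_zero.mpr (pow_ne_zero 2 hlam)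

theorem jacobi_fails_at_order_lambda_sq (c : ℝ) (hc : 0 < c) (lam : ℂ) :
    (∀ i ∈ ({1,2,3} : Finset (Fin 4)), ∀ t : Fin 4,
      -(∑ s : Fin 4, lamSol c lam s 0 i * lamSol c lam t s 0)
          + lam * lamSol c lam t 0 i
          + ∑ s : Fin 4, lamSol c lam s 0 0 * lamSol c lam t s i
        = if t = i then -lam^2 else 0) ∧
    (lam ≠ 0 → ∀ i ∈ ({1,2,3} : Finset (Fin 4)), ∃ t : Fin 4,
      -(∑ s : Fin 4, lamSol c lam s 0 i * lamSol c lam t s 0)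
          + lam * lamSol c lam t 0 i
          + ∑ s : Fin 4, lamSol c lam s 0 0 * lamSol c lam t s i
        ≠ 0) :=
  jacobi_fails_at_order_lambda_sq_general c lam
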